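/- Let w be an admissible sequence. Let z ∈ B_{d^*(w,1)} and suppose there exists x ∈ d_*(w,1) with ‖z − x‖_W < 1/2. Then there exist δ > 0 and n_0 ∈ ℕ such that ‖z + λ e_n‖_W ≤ 1 for every scalar λ with |λ| ≤ δ and every n ≥ n_0. -/

import Mathlib

/-!
Write `S_x(k) = x*(1) + ⋯ + x*(k)`. Changing the single coordinate `z n` by `λ` gives
`S_{z+λeₙ}(k+1) ≤ max (S_z(k+1), S_z(k) + |z n| + |λ|)`, and `|z n| + |λ|` is small for `n` large
because `d^*(w,1) ⊆ c₀` (as `W(k)/k → 0`). Since `S_z(k) ≤ W(k)`, the second term fits under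
`W(k+1) = W(k) + w_k` as long as `w_k` is not too small, i.e. for `k` below some `k₀`. Beyond `k₀`,
approximating `z` within `1/2` by `x ∈ d_*(w,1)`, whose ratios tend to `0`, gives
`S_z(k+1) ≤ W(k+1)/2`, leaving room `W(k+1)/2 ≥ 1/2`.
-/

noncomputable section

section Lorentz

open Filter Topology

variable {𝕜 : Type*} [RCLike 𝕜]

/-- `decRearr x n` is the `(n+1)`-th largest value of the sequence `(‖x i‖)_i`, i.e. the
decreasing rearrangement `x*` of `x` (indexed from `0`). -/
noncomputable def decRearr (x : ℕ → 𝕜) (n : ℕ) : ℝ :=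
  sInf {r : ℝ | 0 ≤ r ∧ {i : ℕ | r < ‖x i‖}.Finite ∧ {i : ℕ | r < ‖x i‖}.ncard ≤ n}

/-- `lorentzW w n = W(n) = w_1 + ⋯ + w_n` (with `w` indexed from `0`). -/
def lorentzW (w : ℕ → ℝ) (n : ℕ) : ℝ := ∑ i ∈ Finset.range n, w i

/-- The quotient `(x*(1) + ⋯ + x*(n+1)) / W(n+1)`. -/
noncomputable def lorentzRatio (w : ℕ → ℝ) (x : ℕ → 𝕜) (n : ℕ) : ℝ :=
  (∑ i ∈ Finset.range (n + 1), decRearr x i) / lorentzW w (n + 1)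

/-- The norm `‖x‖_W = sup_n (x*(1) + ⋯ + x*(n)) / W(n)` of `d^*(w,1)`. -/
noncomputable def lorentzDualNorm (w : ℕ → ℝ) (x : ℕ → 𝕜) : ℝ :=
  ⨆ n, lorentzRatio w x n

/-- The norm `‖x‖_{w,1} = Σ_i x*(i) w_i` of the Lorentz sequence space `d(w,1)`. -/
noncomputable def lorentzSumNorm (w : ℕ → ℝ) (x : ℕ → 𝕜) : ℝ :=
  ∑' i, decRearr x i * w i

/-- An admissible sequence: a decreasing sequence of nonnegative reals with `w 0 = 1`,
tending to `0`, whose series diverges. -/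
def IsAdmissible (w : ℕ → ℝ) : Prop :=
  w 0 = 1 ∧ (∀ n, 0 ≤ w n) ∧ Antitone w ∧ Tendsto w atTop (𝓝 0) ∧ ¬ Summable w

/-- Membership in `d^*(w,1)`: bounded sequences with `‖x‖_W < ∞`. -/
def MemLorentzDual (w : ℕ → ℝ) (x : ℕ → 𝕜) : Prop :=
  BddAbove (Set.range fun i => ‖x i‖) ∧ BddAbove (Set.range (lorentzRatio w x))

/-- Membership in the predual `d_*(w,1)`: bounded sequences with
`(x*(1) + ⋯ + x*(n)) / W(n) → 0`. -/
def MemLorentzPredual (w : ℕ → ℝ) (x : ℕ → 𝕜) : Prop :=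
  BddAbove (Set.range fun i => ‖x i‖) ∧ Tendsto (lorentzRatio w x) atTop (𝓝 0)

/-- Membership in the Lorentz sequence space `d(w,1)`. -/
def MemLorentzSpace (w : ℕ → ℝ) (x : ℕ → 𝕜) : Prop :=
  BddAbove (Set.range fun i => ‖x i‖) ∧ Summable fun i => decRearr x i * w i

variable (𝕜)

/-- `E` (with the linear coordinate embedding `toSeq`) is a realization of the predual
`d_*(w,1)` of the Lorentz sequence space `d(w,1)`. -/
structure IsLorentzPredual (w : ℕ → ℝ) (E : Type*) [NormedAddCommGroup E] [NormedSpace 𝕜 E]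
    (toSeq : E →ₗ[𝕜] (ℕ → 𝕜)) : Prop where
  inj : Function.Injective toSeq
  mem_range : ∀ x : ℕ → 𝕜, (∃ e, toSeq e = x) ↔ MemLorentzPredual w x
  norm_eq : ∀ e, ‖e‖ = lorentzDualNorm w (toSeq e)

/-- `E` (with the linear coordinate embedding `toSeq`) is a realization of the dual
`d^*(w,1)` of the Lorentz sequence space `d(w,1)`. -/
structure IsLorentzDual (w : ℕ → ℝ) (E : Type*) [NormedAddCommGroup E] [NormedSpace 𝕜 E]
    (toSeq : E →ₗ[𝕜] (ℕ → 𝕜)) : Prop where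
  inj : Function.Injective toSeq
  mem_range : ∀ x : ℕ → 𝕜, (∃ e, toSeq e = x) ↔ MemLorentzDual w x
  norm_eq : ∀ e, ‖e‖ = lorentzDualNorm w (toSeq e)

/-- `E` (with the linear coordinate embedding `toSeq`) is a realization of the Lorentz
sequence space `d(w,1)`. -/
structure IsLorentzSpace (w : ℕ → ℝ) (E : Type*) [NormedAddCommGroup E] [NormedSpace 𝕜 E]
    (toSeq : E →ₗ[𝕜] (ℕ → 𝕜)) : Prop where
  inj : Function.Injective toSeq
  mem_range : ∀ x : ℕ → 𝕜, (∃ e, toSeq e = x) ↔ MemLorentzSpace w x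
  norm_eq : ∀ e, ‖e‖ = lorentzSumNorm w (toSeq e)

end Lorentz

section DecreasingRearrangement

variable {𝕜 : Type*} [RCLike 𝕜]

def sumDecRearr (x : ℕ → 𝕜) (k : ℕ) : ℝ := ∑ i ∈ Finset.range k, decRearr x i

theorem decRearr_nonneg (x : ℕ → 𝕜) (n : ℕ) : 0 ≤ decRearr x n :=
  Real.sInf_nonneg fun _ hr => hr.1

theorem sumDecRearr_succ (x : ℕ → 𝕜) (k : ℕ) :
    sumDecRearr x (k + 1) = sumDecRearr x k + decRearr x k :=
  Finset.sum_range_succ _ _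

theorem sumDecRearr_mono (x : ℕ → 𝕜) : Monotone (sumDecRearr x) := fun _ _ h =>
  Finset.sum_le_sum_of_subset_of_nonneg (Finset.range_subset_range.mpr h)
    fun i _ _ => decRearr_nonneg x i

theorem le_decRearr_of_card_lt {x : ℕ → 𝕜} (hx : BddAbove (Set.range fun i => ‖x i‖))
    {k : ℕ} {F : Finset ℕ} {r : ℝ} (hF : k < F.card) (hr : ∀ i ∈ F, r ≤ ‖x i‖) :
    r ≤ decRearr x k := by
  obtain ⟨M, hM⟩ := hx
  have hM' : ∀ i, ‖x i‖ ≤ max M 0 := fun i =>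
    (hM (Set.mem_range_self i)).trans (le_max_left _ _)
  refine le_csInf ⟨max M 0, le_max_right _ _, ?_⟩ fun s ⟨_, hfin, hcard⟩ => ?_
  · simp only [(hM' _).not_gt, Set.ofPred_false, Set.finite_empty, Set.ncard_empty, zero_le,
      and_self]
  · by_contra! hs
    have hsub : (F : Set ℕ) ⊆ {i | s < ‖x i‖} := fun i hi => hs.trans_le (hr i hi)
    have := Set.ncard_le_ncard hsub hfin
    rw [Set.ncard_coe_finset] at this
    omega

theorem sum_norm_le_sumDecRearr {x : ℕ → 𝕜} (hx : BddAbove (Set.range fun i => ‖x i‖))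
    {k : ℕ} {F : Finset ℕ} (hF : F.card ≤ k) : ∑ i ∈ F, ‖x i‖ ≤ sumDecRearr x k := by
  induction k generalizing F with
  | zero => simp [Finset.card_eq_zero.mp (Nat.le_zero.mp hF), sumDecRearr]
  | succ k ih =>
    obtain hFk | hFk := hF.lt_or_eq
    · exact (ih (Nat.lt_succ_iff.mp hFk)).trans (sumDecRearr_mono x k.le_succ)
    obtain ⟨i₀, hi₀, hmin⟩ := F.exists_min_image (fun i => ‖x i‖)
      (Finset.card_pos.mp (by omega))
    have hrest := ih (F := F.erase i₀) (by rw [Finset.card_erase_of_mem hi₀]; omega)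
    rw [← Finset.sum_erase_add _ _ hi₀, sumDecRearr_succ]
    exact add_le_add hrest (le_decRearr_of_card_lt hx (by omega) hmin)

theorem exists_finset_sumDecRearr_le (x : ℕ → 𝕜) (k : ℕ) {ε : ℝ} (hε : 0 < ε) :
    ∃ F : Finset ℕ, F.card ≤ k ∧ sumDecRearr x k ≤ ∑ i ∈ F, ‖x i‖ + ε := by
  induction k generalizing ε with
  | zero => exact ⟨∅, le_rfl, by simp [sumDecRearr, hε.le]⟩
  | succ k ih =>
    obtain ⟨F, hFk, hF⟩ := ih (half_pos hε)
    rw [sumDecRearr_succ]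
    obtain hd | hd := le_or_gt (decRearr x k) (ε / 2)
    · exact ⟨F, hFk.trans k.le_succ, by linarith⟩
    -- `r` lies below the infimum defining `decRearr x k`, so more than `k` norms exceed it.
    set r := decRearr x k - ε / 2 with hr_def
    have hr : r < decRearr x k := by linarith
    have hnot : ¬ {i | r < ‖x i‖} ⊆ F := fun hsub =>
      (notMem_of_lt_csInf hr ⟨0, fun _ hs => hs.1⟩)
        ⟨by linarith, F.finite_toSet.subset hsub,
          (Set.ncard_le_ncard hsub F.finite_toSet).trans ((Set.ncard_coe_finset F).trans_le hFk)⟩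
    obtain ⟨i₀, hi₀, hi₀F⟩ := Set.not_subset.mp hnot
    refine ⟨insert i₀ F, (Finset.card_insert_le _ _).trans (by omega), ?_⟩
    rw [Finset.sum_insert hi₀F]
    have : r < ‖x i₀‖ := hi₀
    linarith

theorem sumDecRearr_le_of_forall_finset {x : ℕ → 𝕜} {k : ℕ} {B : ℝ}
    (h : ∀ F : Finset ℕ, F.card ≤ k → ∑ i ∈ F, ‖x i‖ ≤ B) : sumDecRearr x k ≤ B :=
  le_of_forall_pos_le_add fun _ hε =>
    let ⟨F, hFk, hF⟩ := exists_finset_sumDecRearr_le x k hε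
    hF.trans (add_le_add_left (h F hFk) _)

theorem sumDecRearr_le_add {a b c : ℕ → 𝕜} (ha : BddAbove (Set.range fun i => ‖a i‖))
    (hb : BddAbove (Set.range fun i => ‖b i‖)) (h : ∀ i, ‖c i‖ ≤ ‖a i‖ + ‖b i‖) (k : ℕ) :
    sumDecRearr c k ≤ sumDecRearr a k + sumDecRearr b k :=
  sumDecRearr_le_of_forall_finset fun F hF => calc
    ∑ i ∈ F, ‖c i‖ ≤ ∑ i ∈ F, ‖a i‖ + ∑ i ∈ F, ‖b i‖ := by
      rw [← Finset.sum_add_distrib]; exact Finset.sum_le_sum fun i _ => h i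
    _ ≤ sumDecRearr a k + sumDecRearr b k :=
      add_le_add (sum_norm_le_sumDecRearr ha hF) (sum_norm_le_sumDecRearr hb hF)

theorem sumDecRearr_add_smul_single_le {z : ℕ → 𝕜} (hz : BddAbove (Set.range fun i => ‖z i‖))
    (n : ℕ) (lam : 𝕜) (k : ℕ) :
    sumDecRearr (z + lam • (Pi.single n (1 : 𝕜) : ℕ → 𝕜)) (k + 1) ≤
      max (sumDecRearr z (k + 1)) (sumDecRearr z k + ‖z n‖ + ‖lam‖) := by
  refine sumDecRearr_le_of_forall_finset fun F hF => ?_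
  have hoff : ∀ i ∈ F.erase n, ‖(z + lam • (Pi.single n (1 : 𝕜) : ℕ → 𝕜)) i‖ = ‖z i‖ :=
    fun i hi => by simp [Pi.single_eq_of_ne (Finset.ne_of_mem_erase hi)]
  by_cases hn : n ∈ F
  · refine le_max_of_le_right ?_
    rw [← Finset.sum_erase_add _ _ hn, Finset.sum_congr rfl hoff]
    have hrest := sum_norm_le_sumDecRearr hz (k := k) (F := F.erase n)
      (by rw [Finset.card_erase_of_mem hn]; omega)
    have hat : ‖z n + lam‖ ≤ ‖z n‖ + ‖lam‖ := norm_add_le _ _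
    simp only [Pi.add_apply, Pi.smul_apply, Pi.single_eq_same, smul_eq_mul, mul_one]
    linarith
  · refine le_max_of_le_left ?_
    rw [← Finset.erase_eq_of_notMem hn, Finset.sum_congr rfl hoff]
    exact sum_norm_le_sumDecRearr hz ((Finset.card_erase_le).trans hF)

end DecreasingRearrangement

namespace IsAdmissible

variable {w : ℕ → ℝ}

theorem pos (hw : IsAdmissible w) (k : ℕ) : 0 < w k := by
  obtain ⟨-, hnonneg, hanti, -, hdiv⟩ := hw
  refine (hnonneg k).lt_of_ne fun hk => hdiv ?_
  refine summable_of_ne_finset_zero (s := Finset.range k) fun i hi => ?_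
  have hki : k ≤ i := by simpa using hi
  exact le_antisymm (hk ▸ hanti hki) (hnonneg i)

theorem one_le_lorentzW_succ (hw : IsAdmissible w) (k : ℕ) : 1 ≤ lorentzW w (k + 1) :=
  hw.1 ▸ Finset.single_le_sum (fun i _ => hw.2.1 i) (Finset.mem_range.mpr k.succ_pos)

theorem lorentzW_succ_pos (hw : IsAdmissible w) (k : ℕ) : 0 < lorentzW w (k + 1) :=
  one_pos.trans_le (hw.one_le_lorentzW_succ k)

end IsAdmissible

section LorentzDual

open Filter Topology

variable {𝕜 : Type*} [RCLike 𝕜] {w : ℕ → ℝ}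

theorem lorentzRatio_le_iff (hw : IsAdmissible w) (x : ℕ → 𝕜) (k : ℕ) {C : ℝ} :
    lorentzRatio w x k ≤ C ↔ sumDecRearr x (k + 1) ≤ C * lorentzW w (k + 1) :=
  div_le_iff₀ (hw.lorentzW_succ_pos k)

theorem lorentzRatio_le_add (hw : ∀ i, 0 ≤ w i) {a b c : ℕ → 𝕜}
    (ha : BddAbove (Set.range fun i => ‖a i‖)) (hb : BddAbove (Set.range fun i => ‖b i‖))
    (h : ∀ i, ‖c i‖ ≤ ‖a i‖ + ‖b i‖) (k : ℕ) :
    lorentzRatio w c k ≤ lorentzRatio w a k + lorentzRatio w b k := by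
  rw [lorentzRatio, lorentzRatio, lorentzRatio, ← add_div]
  exact div_le_div_of_nonneg_right (sumDecRearr_le_add ha hb h _)
    (Finset.sum_nonneg fun i _ => hw i)

theorem MemLorentzPredual.memLorentzDual {x : ℕ → 𝕜} (hx : MemLorentzPredual w x) :
    MemLorentzDual w x :=
  ⟨hx.1, hx.2.bddAbove_range⟩

theorem bddAbove_range_norm_sub {a b : ℕ → 𝕜}
    (ha : BddAbove (Set.range fun i => ‖a i‖)) (hb : BddAbove (Set.range fun i => ‖b i‖)) :
    BddAbove (Set.range fun i => ‖(a - b) i‖) := by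
  obtain ⟨A, hA⟩ := ha
  obtain ⟨B, hB⟩ := hb
  refine ⟨A + B, Set.forall_mem_range.mpr fun i => (norm_sub_le _ _).trans ?_⟩
  exact add_le_add (hA (Set.mem_range_self i)) (hB (Set.mem_range_self i))

theorem MemLorentzDual.sub (hw : ∀ i, 0 ≤ w i) {a b : ℕ → 𝕜} (ha : MemLorentzDual w a)
    (hb : MemLorentzDual w b) : MemLorentzDual w (a - b) := by
  obtain ⟨A, hA⟩ := ha.2
  obtain ⟨B, hB⟩ := hb.2
  refine ⟨bddAbove_range_norm_sub ha.1 hb.1, A + B,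
    Set.forall_mem_range.mpr fun k => ?_⟩
  exact (lorentzRatio_le_add hw ha.1 hb.1 (fun i => norm_sub_le _ _) k).trans
    (add_le_add (hA (Set.mem_range_self k)) (hB (Set.mem_range_self k)))

theorem eventually_lorentzRatio_lt (hw : ∀ i, 0 ≤ w i) {z x : ℕ → 𝕜}
    (hz : MemLorentzDual w z) (hx : MemLorentzPredual w x) {r : ℝ}
    (hzx : lorentzDualNorm w (z - x) < r) :
    ∀ᶠ k in atTop, lorentzRatio w z k < r := by
  have hzx' := hz.sub hw hx.memLorentzDual
  filter_upwards [hx.2.eventually_lt_const (sub_pos.mpr hzx)] with k hk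
  have hsplit : ∀ i, ‖z i‖ ≤ ‖(z - x) i‖ + ‖x i‖ := fun i => by
    simpa using norm_add_le ((z - x) i) (x i)
  have hnorm : lorentzRatio w (z - x) k ≤ lorentzDualNorm w (z - x) := le_ciSup hzx'.2 k
  linarith [lorentzRatio_le_add hw hzx'.1 hx.1 hsplit k]

-- `d^*(w,1) ⊆ c₀`: `k` coordinates above `ε` force `k ε ≤ C W(k)`, while `W(k)/k → 0`.
theorem MemLorentzDual.tendsto_norm (hw : IsAdmissible w) {z : ℕ → 𝕜}
    (hz : MemLorentzDual w z) : Tendsto (fun i => ‖z i‖) atTop (𝓝 0) := by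
  obtain ⟨C, hC⟩ := hz.2
  have hS : ∀ k, sumDecRearr z (k + 1) ≤ C * lorentzW w (k + 1) := fun k =>
    (lorentzRatio_le_iff hw z k).mp (hC (Set.mem_range_self k))
  refine tendsto_order.mpr
    ⟨fun a ha => Eventually.of_forall fun i => ha.trans_le (norm_nonneg _), fun ε hε => ?_⟩
  rw [← Nat.cofinite_eq_atTop, eventually_cofinite]
  by_contra hinf
  have hces : Tendsto (fun k : ℕ => C * ((k : ℝ)⁻¹ * lorentzW w k)) atTop (𝓝 0) := by
    simpa [lorentzW] using hw.2.2.2.1.cesaro.const_mul C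
  obtain ⟨k, hk⟩ := eventually_atTop.mp (hces.eventually_lt_const hε)
  obtain ⟨F, hFsub, hFcard⟩ := Set.Infinite.exists_subset_card_eq hinf (k + 1)
  have hlow : (k + 1 : ℕ) * ε ≤ ∑ i ∈ F, ‖z i‖ := by
    rw [← hFcard, ← nsmul_eq_mul, ← Finset.sum_const]
    exact Finset.sum_le_sum fun i hi => not_lt.mp (hFsub hi)
  have hup := (sum_norm_le_sumDecRearr hz.1 hFcard.le).trans (hS k)
  have hsmall := hk (k + 1) k.le_succ
  rw [mul_left_comm, inv_mul_lt_iff₀ (by positivity)] at hsmall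
  push_cast at hlow hsmall
  linarith

theorem lorentzDualNorm_add_smul_single_le_one (hw : IsAdmissible w) {z : ℕ → 𝕜}
    (hz : MemLorentzDual w z) (hz1 : lorentzDualNorm w z ≤ 1) {k₀ : ℕ} {c : ℝ}
    (htail : ∀ k, k₀ ≤ k → lorentzRatio w z k ≤ 1 - c) (hc : c ≤ w k₀) {n : ℕ} {lam : 𝕜}
    (hzn : ‖z n‖ + ‖lam‖ ≤ c) :
    lorentzDualNorm w (z + lam • (Pi.single n (1 : 𝕜) : ℕ → 𝕜)) ≤ 1 := by
  have hS : ∀ k, sumDecRearr z k ≤ lorentzW w k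
    | 0 => by simp [sumDecRearr, lorentzW]
    | k + 1 => by simpa using (lorentzRatio_le_iff hw z k).mp ((le_ciSup hz.2 k).trans hz1)
  refine ciSup_le fun k => (lorentzRatio_le_iff hw _ k).mpr ?_
  rw [one_mul]
  refine (sumDecRearr_add_smul_single_le hz.1 n lam k).trans (max_le (hS (k + 1)) ?_)
  -- The new entry needs room `c`: `W(k+1) - W(k) = w k ≥ c` for `k < k₀`, and beyond `k₀`
  -- the tail bound leaves `c W(k+1) ≥ c`.
  obtain hk | hk := lt_or_ge k k₀
  · have hW : lorentzW w (k + 1) = lorentzW w k + w k := Finset.sum_range_succ _ _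
    linarith [hS k, hw.2.2.1 hk.le]
  · have hc0 : 0 ≤ c := (add_nonneg (norm_nonneg _) (norm_nonneg _)).trans hzn
    have htail' := (lorentzRatio_le_iff hw z k).mp (htail k hk)
    linarith [sumDecRearr_mono z k.le_succ,
      le_mul_of_one_le_right hc0 (hw.one_le_lorentzW_succ k)]

end LorentzDual

/-- Lemma 4.4: let `w` be an admissible sequence, `z` in the unit ball of `d^*(w,1)`, and
suppose there is `x ∈ d_*(w,1)` with `‖z − x‖_W < 1/2`.  Then `z` satisfies the extremal
condition (3.1): there are `δ > 0` and `n₀` with `‖z + λ eₙ‖_W ≤ 1` for all `|λ| ≤ δ` and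
`n ≥ n₀`. -/
theorem lorentz_dual_extremal_condition
    {𝕜 : Type*} [RCLike 𝕜] (w : ℕ → ℝ) (hw : IsAdmissible w)
    (z : ℕ → 𝕜) (hz : MemLorentzDual w z) (hz1 : lorentzDualNorm w z ≤ 1)
    (x : ℕ → 𝕜) (hx : MemLorentzPredual w x)
    (hzx : lorentzDualNorm w (z - x) < 1 / 2) :
    ∃ (δ : ℝ) (n₀ : ℕ), 0 < δ ∧
      ∀ lam : 𝕜, ‖lam‖ ≤ δ → ∀ n, n₀ ≤ n →
        lorentzDualNorm w (z + lam • (Pi.single n (1 : 𝕜) : ℕ → 𝕜)) ≤ 1 := by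
  obtain ⟨k₀, hk₀⟩ := Filter.eventually_atTop.mp (eventually_lorentzRatio_lt hw.2.1 hz hx hzx)
  set c := min (w k₀) (1 / 2)
  have hc : 0 < c := lt_min (hw.pos k₀) one_half_pos
  obtain ⟨n₀, hn₀⟩ := Filter.eventually_atTop.mp
    ((hz.tendsto_norm hw).eventually (ge_mem_nhds (half_pos hc)))
  refine ⟨c / 2, n₀, half_pos hc, fun lam hlam n hn => ?_⟩
  refine lorentzDualNorm_add_smul_single_le_one hw hz hz1 (c := c) (fun k hk => ?_)
    (min_le_left _ _) ?_
  · linarith [hk₀ k hk, min_le_right (w k₀) (1 / 2)]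
  · linarith [hn₀ n hn]
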